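/- arXiv:2311.15777 — 2 statements merged into one kernel-verified Lean document; each statement's English description precedes it below -/
import Mathlib

section
/- With the unary-encoded bit string B of a nondecreasing positive weight sequence weight(v₁) ≤ ⋯ ≤ weight(v_ℓ), for any k with 1 ≤ k ≤ weight(v_ℓ): letting j = select₁(B, k) (the position of the k-th one in B) and f = rank₀(B, j) (the number of zeros in B[1..j]), the node v_{f+1} is the first node in the sequence with weight(v_{f+1}) ≥ k; that is, weight(v_{f+1}) ≥ k and either f = 0 or weight(v_f) < k. -/
/-- Unary code of `m`: `m` ones followed by a single zero (`true` = 1, `false` = 0). -/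
def enc (m : ℕ) : List Bool := List.replicate m true ++ [false]

/-- The unary difference encoding `B = enc(w₁)·enc(w₂−w₁)⋯enc(w_ℓ−w_{ℓ−1})`
of a weight sequence `w 1, …, w ℓ` (with the convention `w 0 = 0`). -/
def encB (w : ℕ → ℕ) (ℓ : ℕ) : List Bool :=
  (List.range ℓ).flatMap fun i => enc (w (i + 1) - w i)

/-- `rank B b p`: number of bits equal to `b` among the first `p` bits of `B` (1-indexed positions). -/
def rank (B : List Bool) (b : Bool) (p : ℕ) : ℕ := (B.take p).count b

/-- `select B b k`: the (1-indexed) position of the `k`-th occurrence of bit `b` in `B`,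
i.e. the least `p` with `rank B b p = k`. -/
def select (B : List Bool) (b : Bool) (k : ℕ) : ℕ :=
  (((List.range (B.length + 1)).filter fun p => rank B b p == k).head?).getD 0

/-!
Let `f` be the first index with `k ≤ w (f + 1)`. The prefix of `B` of length `f + k` consists of
the first `f` codewords, which contain `w f` ones and `f` zeros, followed by `k - w f` ones of the
next codeword. So position `f + k` holds the `k`-th one, and exactly `f` zeros precede it.
-/

theorem exists_lt_le_add_one {β : Type*} [LinearOrder β] {t : ℕ → β} {x : β} {ℓ : ℕ}
    (h0 : t 0 < x) (hℓ : x ≤ t ℓ) : ∃ n < ℓ, t n < x ∧ x ≤ t (n + 1) := by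
  induction ℓ with
  | zero => exact absurd hℓ (not_le.2 h0)
  | succ ℓ ih =>
    by_cases h : x ≤ t ℓ
    · obtain ⟨n, hn, hxn⟩ := ih h
      exact ⟨n, by omega, hxn⟩
    · exact ⟨ℓ, by omega, not_le.1 h, hℓ⟩

theorem rank_mono (B : List Bool) (b : Bool) : Monotone (rank B b) :=
  fun _ _ h => (List.take_prefix_take_left h).count_le b

theorem select_eq_of_rank_eq {B : List Bool} {b : Bool} {k q : ℕ} (hq : q ≤ B.length) (hk : rank B b q = k)
    (hpred : rank B b (q - 1) < k) : select B b k = q := by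
  have hmin : ∀ p < q, rank B b p ≠ k := fun p hp =>
    (lt_of_le_of_lt (rank_mono B b (by omega : p ≤ q - 1)) hpred).ne
  have : (List.range (B.length + 1)).find? (fun p => rank B b p == k) = some q := by
    simpa [hk, Nat.lt_succ_iff.2 hq] using hmin
  simp [select, this]

section Encoding

variable {w : ℕ → ℕ}

theorem encB_succ (w : ℕ → ℕ) (t : ℕ) :
    encB w (t + 1) = encB w t ++ enc (w (t + 1) - w t) := by
  simp [encB, List.range_succ]

theorem encB_prefix (w : ℕ → ℕ) {t ℓ : ℕ} (h : t ≤ ℓ) : encB w t <+: encB w ℓ := by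
  obtain ⟨d, rfl⟩ := Nat.exists_eq_add_of_le h
  exact ⟨_, by rw [encB, encB, List.range_add, List.flatMap_append]⟩

theorem count_true_enc (m : ℕ) : (enc m).count true = m := by
  simp [enc]

theorem count_false_enc (m : ℕ) : (enc m).count false = 1 := by
  simp [enc, List.count_replicate]

theorem count_false_encB (w : ℕ → ℕ) (t : ℕ) : (encB w t).count false = t := by
  induction t with
  | zero => simp [encB]
  | succ t ih => rw [encB_succ, List.count_append, ih, count_false_enc]

theorem count_true_encB {t : ℕ} (h0 : w 0 = 0) (hmono : ∀ i < t, w i ≤ w (i + 1)) :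
    (encB w t).count true = w t := by
  induction t with
  | zero => simp [encB, h0]
  | succ t ih =>
    have := hmono t (by omega)
    rw [encB_succ, List.count_append, ih (fun i hi => hmono i (by omega)), count_true_enc]
    omega

theorem length_encB {t : ℕ} (h0 : w 0 = 0) (hmono : ∀ i < t, w i ≤ w (i + 1)) :
    (encB w t).length = w t + t := by
  rw [← List.count_true_add_count_false, count_true_encB h0 hmono, count_false_encB]

variable {ℓ f m : ℕ} (h0 : w 0 = 0) (hmono : ∀ i < ℓ, w i ≤ w (i + 1)) (hf : f < ℓ)
  (hm : w f ≤ m) (hm' : m ≤ w (f + 1))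
include h0 hmono hf hm hm'

theorem take_encB :
    (encB w ℓ).take (f + m) = encB w f ++ List.replicate (m - w f) true := by
  have hmono' : ∀ i < f, w i ≤ w (i + 1) := fun i hi => hmono i (by omega)
  obtain ⟨D, hD⟩ := encB_prefix w (show f + 1 ≤ ℓ by omega)
  rw [← hD, encB_succ, List.append_assoc,
    show f + m = (encB w f).length + (m - w f) by rw [length_encB h0 hmono']; omega,
    List.take_length_add_append, enc, List.append_assoc,
    List.take_append_of_le_length (by rw [List.length_replicate]; omega), List.take_replicate]
  congr 2
  omega

theorem rank_true_encB : rank (encB w ℓ) true (f + m) = m := by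
  have hmono' : ∀ i < f, w i ≤ w (i + 1) := fun i hi => hmono i (by omega)
  rw [rank, take_encB h0 hmono hf hm hm', List.count_append, count_true_encB h0 hmono',
    List.count_replicate_self]
  omega

theorem rank_false_encB : rank (encB w ℓ) false (f + m) = f := by
  simp [rank, take_encB h0 hmono hf hm hm', count_false_encB, List.count_replicate]

end Encoding

theorem select_true_encB {w : ℕ → ℕ} {ℓ f k : ℕ} (h0 : w 0 = 0)
    (hmono : ∀ i < ℓ, w i ≤ w (i + 1)) (hf : f < ℓ) (hk : w f < k) (hk' : k ≤ w (f + 1)) :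
    select (encB w ℓ) true k = f + k := by
  have hlen : f + k ≤ (encB w ℓ).length := calc
    f + k ≤ (encB w (f + 1)).length := by
      rw [length_encB h0 fun i hi => hmono i (by omega)]; omega
    _ ≤ (encB w ℓ).length := (encB_prefix w hf).length_le
  refine select_eq_of_rank_eq hlen (rank_true_encB h0 hmono hf hk.le hk') ?_
  rw [show f + k - 1 = f + (k - 1) by omega,
    rank_true_encB h0 hmono hf (by omega) (by omega)]
  omega

theorem stmt6_general (w : ℕ → ℕ) (ℓ : ℕ) (h0 : w 0 = 0)
    (hmono : ∀ i < ℓ, w i ≤ w (i + 1))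
    (k : ℕ) (hk1 : 1 ≤ k) (hk2 : k ≤ w ℓ) :
    k ≤ w (rank (encB w ℓ) false (select (encB w ℓ) true k) + 1) ∧
    (rank (encB w ℓ) false (select (encB w ℓ) true k) = 0 ∨
      w (rank (encB w ℓ) false (select (encB w ℓ) true k)) < k) := by
  obtain ⟨f, hf, hwf, hkf⟩ := exists_lt_le_add_one (t := w) (by omega : w 0 < k) hk2
  rw [select_true_encB h0 hmono hf hwf hkf, rank_false_encB h0 hmono hf hwf.le hkf]
  exact ⟨hkf, Or.inr hwf⟩

/-- for 1 ≤ k ≤ w ℓ, with j = select₁(B,k) and f = rank₀(B,j), the node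
v_{f+1} is the first node with weight ≥ k: w (f+1) ≥ k and either f = 0 or w f < k. -/
theorem stmt6 (w : ℕ → ℕ) (ℓ : ℕ) (h0 : w 0 = 0)
    (hmono : ∀ i < ℓ, w i ≤ w (i + 1))
    (hpos : ∀ i, 1 ≤ i → i ≤ ℓ → 1 ≤ w i)
    (hl : 1 ≤ ℓ) (k : ℕ) (hk1 : 1 ≤ k) (hk2 : k ≤ w ℓ) :
    k ≤ w (rank (encB w ℓ) false (select (encB w ℓ) true k) + 1) ∧
    (rank (encB w ℓ) false (select (encB w ℓ) true k) = 0 ∨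
      w (rank (encB w ℓ) false (select (encB w ℓ) true k)) < k) :=
  stmt6_general w ℓ h0 hmono k hk1 hk2
end

section
/- Let T be a rooted tree weighted by a size-constrained max-heap weight function, with a heavy-path decomposition. Fix a query node u and integer k ≥ 1 with k ≤ weight(root). Let H_w be the heavy path containing the answer node w = SWA(u,k) (the lowest ancestor of u with weight ≥ k). Let w₁ be the lowest ancestor of u lying on H_w, and let w₂ be the lowest node on H_w whose weight is at least k. Then w is the higher (closer-to-root) of w₁ and w₂. -/
/-- A rooted tree on a node type `V`, given by a parent function together with a
depth function certifying acyclicity (the parent of a non-root node has depth one less). -/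
structure PTree (V : Type*) where
  root : V
  parent : V → V
  parent_root : parent root = root
  depth : V → ℕ
  depth_root : depth root = 0
  depth_parent : ∀ v, v ≠ root → depth (parent v) + 1 = depth v

namespace PTree

variable {V : Type*}

/-- `T.Anc a u` : `a` is an ancestor of `u` (a node is an ancestor of itself). -/
def Anc (T : PTree V) (a u : V) : Prop := ∃ m, T.parent^[m] u = a

/-- number of nodes in the subtree rooted at `u`. -/
noncomputable def size (T : PTree V) (u : V) : ℕ := Set.ncard {v | T.Anc u v}

/-- `v` is a child of `u`. -/
def IsChild (T : PTree V) (v u : V) : Prop := v ≠ T.root ∧ T.parent v = u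

def IsLeaf (T : PTree V) (u : V) : Prop := ∀ v, ¬ T.IsChild v u

/-- number of leaves in the subtree rooted at `u`. -/
noncomputable def leafCount (T : PTree V) (u : V) : ℕ :=
  Set.ncard {v | T.Anc u v ∧ T.IsLeaf v}

/-- `heavy` assigns to each internal node a child of maximal subtree size (its heavy child). -/
def IsHeavy (T : PTree V) (heavy : V → V) : Prop :=
  ∀ u, (∃ v, T.IsChild v u) →
    T.IsChild (heavy u) u ∧ ∀ w, T.IsChild w u → T.size w ≤ T.size (heavy u)

/-- `t` is the top node of some heavy path: it is the root or a light child. -/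
def IsTop (T : PTree V) (heavy : V → V) (t : V) : Prop :=
  t = T.root ∨ heavy (T.parent t) ≠ t

/-- number of light edges on the root-to-`u` path. -/
noncomputable def lightCount (T : PTree V) (heavy : V → V) (u : V) : ℕ :=
  Set.ncard {v | T.Anc v u ∧ v ≠ T.root ∧ heavy (T.parent v) ≠ v}

/-- `pt` maps every node to the top node of the heavy path containing it. -/
def IsPathTop (T : PTree V) (heavy : V → V) (pt : V → V) : Prop :=
  (∀ v, T.Anc (pt v) v ∧ T.IsTop heavy (pt v)) ∧
  (∀ v, v ≠ pt v → heavy (T.parent v) = v ∧ pt (T.parent v) = pt v) ∧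
  (∀ v, pt (pt v) = pt v)

/-- `weight` is a size-constrained max-heap weight function. -/
def IsSCMaxHeap (T : PTree V) (weight : V → ℕ) : Prop :=
  (∀ u, 1 ≤ weight u) ∧ (∀ u, weight u ≤ T.size u) ∧
  (∀ a u, T.Anc a u → weight u ≤ weight a)

end PTree

section Aux

variable {V : Type*} (T : PTree V)

lemma aux_depth_parent_le (v : V) : T.depth (T.parent v) ≤ T.depth v := by
  by_cases h : v = T.root
  · subst h; rw [T.parent_root]
  · have := T.depth_parent v h; omega

lemma aux_depth_iter_le (m : ℕ) (v : V) : T.depth (T.parent^[m] v) ≤ T.depth v := by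
  induction m generalizing v with
  | zero => simp
  | succ n ih =>
    rw [Function.iterate_succ_apply]
    exact (ih (T.parent v)).trans (aux_depth_parent_le T v)

lemma aux_anc_depth_le {a u : V} (h : T.Anc a u) : T.depth a ≤ T.depth u := by
  obtain ⟨m, rfl⟩ := h; exact aux_depth_iter_le T m u

lemma aux_iter_root (m : ℕ) : T.parent^[m] T.root = T.root := by
  induction m with
  | zero => rfl
  | succ n ih => rw [Function.iterate_succ_apply, T.parent_root, ih]

lemma aux_anc_eq {a u : V} (h : T.Anc a u) (hd : T.depth u ≤ T.depth a) : a = u := by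
  obtain ⟨m, rfl⟩ := h
  cases m with
  | zero => rfl
  | succ n =>
    by_cases hr : u = T.root
    · subst hr; exact aux_iter_root T _
    · exfalso
      rw [Function.iterate_succ_apply] at hd
      have h1 := aux_depth_iter_le T n (T.parent u)
      have h2 := T.depth_parent u hr
      omega

lemma aux_anc_trans {a b c : V} (hab : T.Anc a b) (hbc : T.Anc b c) : T.Anc a c := by
  obtain ⟨m, rfl⟩ := hab; obtain ⟨n, rfl⟩ := hbc
  exact ⟨m + n, (Function.iterate_add_apply _ m n c)⟩

lemma aux_anc_total {a b u : V} (ha : T.Anc a u) (hb : T.Anc b u)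
    (hd : T.depth a ≤ T.depth b) : T.Anc a b := by
  obtain ⟨m, rfl⟩ := ha; obtain ⟨n, rfl⟩ := hb
  rcases le_or_gt n m with h | h
  · refine ⟨m - n, ?_⟩
    rw [← Function.iterate_add_apply]
    congr 1; omega
  · have hba : T.Anc (T.parent^[n] u) (T.parent^[m] u) := by
      refine ⟨n - m, ?_⟩
      rw [← Function.iterate_add_apply]
      congr 1; omega
    have : T.parent^[n] u = T.parent^[m] u :=
      aux_anc_eq T hba (le_antisymm hd (aux_anc_depth_le T hba) ▸ le_refl _)
    rw [this]; exact ⟨0, rfl⟩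

lemma aux_path_anc (heavy : V → V) (pt : V → V) (hpt : T.IsPathTop heavy pt) :
    ∀ n y x, T.depth y = n → pt x = pt y → T.depth x ≤ T.depth y → T.Anc x y := by
  intro n
  induction n using Nat.strong_induction_on with
  | _ n IH =>
    intro y x hdy hpxy hle
    obtain ⟨hpt1, hpt2, _⟩ := hpt
    by_cases hy : y = pt y
    · -- y is the top: forces x = y
      have hax : T.Anc (pt x) x := (hpt1 x).1
      have h1 : T.depth (pt x) ≤ T.depth x := aux_anc_depth_le T hax
      have h2 : T.depth (pt x) = T.depth y := by rw [hpxy, ← hy]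
      have hx : pt x = x := aux_anc_eq T hax (by omega)
      have : x = y := by rw [← hx, hpxy, ← hy]
      rw [this]; exact ⟨0, rfl⟩
    · have hy' := hpt2 y (fun h => hy h)
      have hyroot : y ≠ T.root := by
        intro h
        have hax : T.Anc (pt y) y := (hpt1 y).1
        have := aux_anc_depth_le T hax
        have : pt y = y := aux_anc_eq T hax (by subst h; simp [T.depth_root] at this ⊢)
        exact hy this.symm
      have hdp : T.depth (T.parent y) + 1 = T.depth y := T.depth_parent y hyroot
      rcases lt_or_eq_of_le hle with hlt | heq
      · -- depth x < depth y : go through parent y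
        have hx_le : T.depth x ≤ T.depth (T.parent y) := by omega
        have hanc : T.Anc x (T.parent y) :=
          IH (T.depth (T.parent y)) (by omega) (T.parent y) x rfl
            (by rw [hy'.2, hpxy]) hx_le
        exact aux_anc_trans T hanc ⟨1, rfl⟩
      · -- equal depths : show x = y
        by_cases hx : x = pt x
        · exfalso
          have hax : T.Anc (pt y) y := (hpt1 y).1
          have h1 : T.depth (pt y) ≤ T.depth y := aux_anc_depth_le T hax
          have h2 : T.depth (pt y) = T.depth y := by
            rw [← hpxy, ← hx, heq]
          have : pt y = y := aux_anc_eq T hax (by omega)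
          exact hy this.symm
        · have hx' := hpt2 x (fun h => hx h)
          have hxroot : x ≠ T.root := by
            intro h
            have hax : T.Anc (pt x) x := (hpt1 x).1
            have := aux_anc_depth_le T hax
            have : pt x = x := aux_anc_eq T hax (by subst h; simp [T.depth_root] at this ⊢)
            exact hx this.symm
          have hdpx : T.depth (T.parent x) + 1 = T.depth x := T.depth_parent x hxroot
          have hdeq : T.depth (T.parent x) = T.depth (T.parent y) := by omega
          have hanc : T.Anc (T.parent x) (T.parent y) :=
            IH (T.depth (T.parent y)) (by omega) (T.parent y) (T.parent x) rfl
              (by rw [hx'.2, hy'.2, hpxy]) (le_of_eq hdeq)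
          have hpeq : T.parent x = T.parent y := aux_anc_eq T hanc (le_of_eq hdeq.symm)
          have : x = y := by rw [← hx'.1, hpeq, hy'.1]
          rw [this]; exact ⟨0, rfl⟩

end Aux

/-- let w = SWA(u,k) be the lowest ancestor of u with weight ≥ k, lying on
heavy path H_w (the heavy path with top node pt w); let w₁ be the lowest ancestor of u on
H_w and w₂ the lowest node of H_w with weight ≥ k. Then w is the higher of w₁ and w₂. -/
theorem stmt12 {V : Type*} [Fintype V] (T : PTree V) (heavy : V → V) (pt : V → V)
    (weight : V → ℕ) (hheavy : T.IsHeavy heavy) (hpt : T.IsPathTop heavy pt)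
    (hw : T.IsSCMaxHeap weight) (u : V) (k : ℕ) (hk : 1 ≤ k)
    (w w₁ w₂ : V)
    (hwAnc : T.Anc w u) (hwk : k ≤ weight w)
    (hwLow : ∀ a, T.Anc a u → k ≤ weight a → T.depth a ≤ T.depth w)
    (hw₁ : T.Anc w₁ u ∧ pt w₁ = pt w ∧
      ∀ a, T.Anc a u → pt a = pt w → T.depth a ≤ T.depth w₁)
    (hw₂ : pt w₂ = pt w ∧ k ≤ weight w₂ ∧
      ∀ x, pt x = pt w → k ≤ weight x → T.depth x ≤ T.depth w₂) :
    (T.depth w₁ ≤ T.depth w₂ → w = w₁) ∧ (T.depth w₂ ≤ T.depth w₁ → w = w₂) := by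
  obtain ⟨hw1u, hw1pt, hw1low⟩ := hw₁
  obtain ⟨hw2pt, hw2k, hw2low⟩ := hw₂
  have hA : T.depth w ≤ T.depth w₁ := hw1low w hwAnc rfl
  have hB : T.depth w ≤ T.depth w₂ := hw2low w rfl hwk
  constructor
  · intro h
    have hanc12 : T.Anc w₁ w₂ :=
      aux_path_anc T heavy pt hpt (T.depth w₂) w₂ w₁ rfl (hw1pt.trans hw2pt.symm) h
    have hk1 : k ≤ weight w₁ := hw2k.trans (hw.2.2 w₁ w₂ hanc12)
    have hle : T.depth w₁ ≤ T.depth w := hwLow w₁ hw1u hk1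
    have hancw1 : T.Anc w w₁ := aux_anc_total T hwAnc hw1u hA
    exact aux_anc_eq T hancw1 hle
  · intro h
    have hanc21 : T.Anc w₂ w₁ :=
      aux_path_anc T heavy pt hpt (T.depth w₁) w₁ w₂ rfl (hw2pt.trans hw1pt.symm) h
    have hanc2u : T.Anc w₂ u := aux_anc_trans T hanc21 hw1u
    have hle : T.depth w₂ ≤ T.depth w := hwLow w₂ hanc2u hw2k
    have hancw2 : T.Anc w w₂ := aux_anc_total T hwAnc hanc2u hB
    exact aux_anc_eq T hancw2 hle
end
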